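/- Over any field F, VP_1^weakest(F) = VNP_1^weakest(F) and VP_1^weak(F) = VNP_1^weak(F); moreover, if the characteristic of F is different from 2, then VP_1^gen(F) ⊊ VNP_1^gen(F). -/

import Mathlib

open MvPolynomial

noncomputable section

/-- A function `ℕ → ℕ` is polynomially bounded. -/
def PolyBounded (f : ℕ → ℕ) : Prop := ∃ c : ℕ, ∀ n, f n ≤ (n + 2) ^ c

/-- A sequence of multivariate polynomials is a family: `f n` uses only variables `x_i`
with `i < v n`, for a polynomially bounded `v`. -/
def IsPolyFamily {F : Type} [CommSemiring F] (f : ℕ → MvPolynomial ℕ F) : Prop :=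
  ∃ v : ℕ → ℕ, PolyBounded v ∧ ∀ n, ∀ i ∈ (f n).vars, i < v n

/-- Arithmetic formulas over `F` in variables `x_i`, `i : ℕ`: expressions built from
variables and constants by binary additions and multiplications. -/
inductive Formula (F : Type) where
  | var : ℕ → Formula F
  | const : F → Formula F
  | add : Formula F → Formula F → Formula F
  | mul : Formula F → Formula F → Formula F

namespace Formula

variable {F : Type} [CommSemiring F]

/-- The polynomial computed by an arithmetic formula. -/
def eval : Formula F → MvPolynomial ℕ F
  | var i => X i
  | const c => C c
  | add φ ψ => φ.eval + ψ.eval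
  | mul φ ψ => φ.eval * ψ.eval

/-- The size of a formula: the number of (binary) operations. -/
def size : Formula F → ℕ
  | var _ => 0
  | const _ => 0
  | add φ ψ => φ.size + ψ.size + 1
  | mul φ ψ => φ.size + ψ.size + 1

/-- The depth of a formula: the length of the longest root-to-leaf path. -/
def depth : Formula F → ℕ
  | var _ => 0
  | const _ => 0
  | add φ ψ => max φ.depth ψ.depth + 1
  | mul φ ψ => max φ.depth ψ.depth + 1

end Formula

/-- A general affine linear form `∑ αᵢ xᵢ + β`, i.e. a polynomial of total degree ≤ 1. -/
def IsGenForm {F : Type} [CommSemiring F] (p : MvPolynomial ℕ F) : Prop := p.totalDegree ≤ 1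

/-- A single variable or a constant. -/
def IsWeakestForm {F : Type} [CommSemiring F] (p : MvPolynomial ℕ F) : Prop :=
  (∃ i, p = X i) ∨ ∃ c, p = C c

/-- A simple affine linear form `α·xᵢ + β`. -/
def IsWeakForm {F : Type} [CommSemiring F] (p : MvPolynomial ℕ F) : Prop :=
  ∃ (α β : F) (i : ℕ), p = C α * X i + C β

/-- An affine linear form in at most two variables, `α·xᵢ + β·xⱼ + γ`. -/
def IsWeakPlusForm {F : Type} [CommSemiring F] (p : MvPolynomial ℕ F) : Prop :=
  ∃ (α β γ : F) (i j : ℕ), p = C α * X i + C β * X j + C γ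

/-- `ABPComputes form k s p`: some width-`k` algebraic branching program of size `s`, all of
whose matrix entries satisfy the predicate `form`, computes the polynomial `p`; that is,
`p = vᵀ · M_s ⋯ M_1 · w` for vectors `v, w ∈ F^k` and matrices `M_i` with entries of
type `form`. -/
def ABPComputes {F : Type} [CommSemiring F] (form : MvPolynomial ℕ F → Prop)
    (k s : ℕ) (p : MvPolynomial ℕ F) : Prop :=
  ∃ (v w : Fin k → F) (M : Fin s → Matrix (Fin k) (Fin k) (MvPolynomial ℕ F)),
    (∀ (i : Fin s) (a b : Fin k), form (M i a b)) ∧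
    p = dotProduct (fun a => C (v a))
          (Matrix.mulVec (List.ofFn M).prod fun a => C (w a))

/-- The class `VP_k^*`: families computable by width-`k` ABPs, with entries of label
type `form`, of polynomially bounded size. -/
def VPkClass (F : Type) [CommSemiring F] (k : ℕ)
    (form : MvPolynomial ℕ F → Prop) : Set (ℕ → MvPolynomial ℕ F) :=
  { f | IsPolyFamily f ∧
        ∃ s : ℕ → ℕ, PolyBounded s ∧ ∀ n, ∃ s' ≤ s n, ABPComputes form k s' (f n) }

/-- The class `VPe`: families computable by arithmetic formulas of polynomially
bounded size. -/
def VPe (F : Type) [CommSemiring F] : Set (ℕ → MvPolynomial ℕ F) :=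
  { f | IsPolyFamily f ∧
        ∃ s : ℕ → ℕ, PolyBounded s ∧ ∀ n, ∃ φ : Formula F, φ.size ≤ s n ∧ φ.eval = f n }

/-- The inclusion `F[x] → F(ε)[x]`. -/
def liftε (F : Type) [Field F] : MvPolynomial ℕ F →+* MvPolynomial ℕ (RatFunc F) :=
  MvPolynomial.map (algebraMap F (RatFunc F))

/-- The inclusion `F[ε][x] → F(ε)[x]`. -/
def liftPolyε (F : Type) [Field F] :
    MvPolynomial ℕ (Polynomial F) →+* MvPolynomial ℕ (RatFunc F) :=
  MvPolynomial.map (algebraMap (Polynomial F) (RatFunc F))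

/-- The approximation closure of a class `Cl` given over `F(ε)`: families `(f_n)` over `F`
for which there are error polynomials `f_{n;1}, …, f_{n;e(n)}` over `F` such that the family
`g_n = f_n + ε f_{n;1} + ⋯ + ε^{e(n)} f_{n;e(n)}` belongs to `Cl` over `F(ε)`. -/
def ApproxClosure (F : Type) [Field F]
    (Cl : Set (ℕ → MvPolynomial ℕ (RatFunc F))) : Set (ℕ → MvPolynomial ℕ F) :=
  { f | IsPolyFamily f ∧ ∃ (e : ℕ → ℕ) (ferr : ℕ → ℕ → MvPolynomial ℕ F),
      (fun n => liftε F (f n) + ∑ i ∈ Finset.range (e n),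
          C ((RatFunc.X : RatFunc F) ^ (i + 1)) * liftε F (ferr n i)) ∈ Cl }

/-- The poly-approximation closure: as `ApproxClosure`, with the error degree `e(n)`
additionally required to be polynomially bounded. -/
def PolyApproxClosure (F : Type) [Field F]
    (Cl : Set (ℕ → MvPolynomial ℕ (RatFunc F))) : Set (ℕ → MvPolynomial ℕ F) :=
  { f | IsPolyFamily f ∧ ∃ e : ℕ → ℕ, PolyBounded e ∧
      ∃ ferr : ℕ → ℕ → MvPolynomial ℕ F,
      (fun n => liftε F (f n) + ∑ i ∈ Finset.range (e n),
          C ((RatFunc.X : RatFunc F) ^ (i + 1)) * liftε F (ferr n i)) ∈ Cl }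

/-- The hypercube sum `∑_{b ∈ {0,1}^p} g(b, x)`: the first `p` variables of `g` are summed
over all Boolean assignments, and variable `p + i` of `g` is renamed to `x_i`. -/
def hcSum {F : Type} [CommSemiring F] (p : ℕ) (g : MvPolynomial ℕ F) : MvPolynomial ℕ F :=
  ∑ b : Fin p → Bool,
    MvPolynomial.aeval
      (fun i : ℕ => if h : i < p then (if b ⟨i, h⟩ then 1 else 0) else X (i - p)) g

/-- The nondeterminism closure `N(Cl)`: families `(f_n)` with
`f_n(x) = ∑_{b ∈ {0,1}^{p(n)}} g_{q(n)}(b,x)` for some `(g_n) ∈ Cl` and polynomially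
bounded `p`, `q`. -/
def Nclosure {F : Type} [CommSemiring F] (Cl : Set (ℕ → MvPolynomial ℕ F)) :
    Set (ℕ → MvPolynomial ℕ F) :=
  { f | IsPolyFamily f ∧ ∃ g ∈ Cl, ∃ p q : ℕ → ℕ, PolyBounded p ∧ PolyBounded q ∧
        ∀ n, f n = hcSum (p n) (g (q n)) }

/-- The matrix `Q(f) = [[f, 1], [1, 0]]`. -/
def Qmat {R : Type} [CommSemiring R] (f : MvPolynomial ℕ R) :
    Matrix (Fin 2) (Fin 2) (MvPolynomial ℕ R) := !![f, 1; 1, 0]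

/-- A primitive Q-matrix: `Q(ℓ)` for a parametrized affine linear form `ℓ`, i.e. an affine
linear form in the `x`-variables with coefficients in `F(ε)`. -/
def IsPrimitiveQ (F : Type) [Field F]
    (M : Matrix (Fin 2) (Fin 2) (MvPolynomial ℕ (RatFunc F))) : Prop :=
  ∃ ℓ : MvPolynomial ℕ (RatFunc F), ℓ.totalDegree ≤ 1 ∧ M = Qmat ℓ

/-- `M` can be written as a product of `n` primitive Q-matrices. -/
def IsProdPrimQ (F : Type) [Field F] (n : ℕ)
    (M : Matrix (Fin 2) (Fin 2) (MvPolynomial ℕ (RatFunc F))) : Prop :=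
  ∃ L : Fin n → Matrix (Fin 2) (Fin 2) (MvPolynomial ℕ (RatFunc F)),
    (∀ i, IsPrimitiveQ F (L i)) ∧ M = (List.ofFn L).prod

/-- `M ∈ Q(f) + O(ε^k)`: `M = Q(f) + ε^k · E` for some matrix `E` with entries
in `F[ε][x]`. -/
def InQErr (F : Type) [Field F] (f : MvPolynomial ℕ F) (k : ℕ)
    (M : Matrix (Fin 2) (Fin 2) (MvPolynomial ℕ (RatFunc F))) : Prop :=
  ∃ E : Matrix (Fin 2) (Fin 2) (MvPolynomial ℕ (Polynomial F)),
    M = Qmat (liftε F f) +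
      (C ((RatFunc.X : RatFunc F) ^ k) : MvPolynomial ℕ (RatFunc F)) • E.map (liftPolyε F)

/-- `M` has entries in `F[ε][x]` and error degree at most `e`: every entry has degree at
most `e` in `ε`. -/
def ErrDegLE (F : Type) [Field F]
    (M : Matrix (Fin 2) (Fin 2) (MvPolynomial ℕ (RatFunc F))) (e : ℕ) : Prop :=
  ∃ E : Matrix (Fin 2) (Fin 2) (MvPolynomial ℕ (Polynomial F)),
    M = E.map (liftPolyε F) ∧
    ∀ (a b : Fin 2) (m : ℕ →₀ ℕ), (MvPolynomial.coeff m (E a b)).natDegree ≤ e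

/-- The generalized Fibonacci polynomials: `F_0 = 1`, `F_1 = x_1`,
`F_n = x_n · F_{n-1} + F_{n-2}` (variables indexed from 0). -/
def fibPoly (R : Type) [CommSemiring R] : ℕ → MvPolynomial ℕ R
  | 0 => 1
  | 1 => X 0
  | n + 2 => X (n + 1) * fibPoly R (n + 1) + fibPoly R n

/-- `f` is a degeneration of the Fibonacci polynomial `F_m` witnessing border Fibonacci
complexity at most `m`: there are parametrized affine linear forms `ℓ_1, …, ℓ_m` with
`F_m(ℓ_1, …, ℓ_m) = f + ε·g` for some `g ∈ F[ε][x]`. -/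
def FibBorderProj (F : Type) [Field F] (f : MvPolynomial ℕ F) (m : ℕ) : Prop :=
  ∃ ℓ : ℕ → MvPolynomial ℕ (RatFunc F),
    (∀ i, (ℓ i).totalDegree ≤ 1) ∧
    ∃ g : MvPolynomial ℕ (Polynomial F),
      MvPolynomial.aeval ℓ (fibPoly (RatFunc F) m) =
        liftε F f + C (RatFunc.X : RatFunc F) * liftPolyε F g


/-!
A width-one ABP computes `c · ℓ₁ ⋯ ℓₛ`. When the `ℓᵢ` are weakest or weak forms, fixing a
prefix of the variables to Boolean values turns each `ℓᵢ` into a scalar, depending on the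
assignment, times a form that does not; so the hypercube sum of such a product is again of the
shape `d · ℓ'₁ ⋯ ℓ'ₛ`, and nondeterminism adds nothing. For general affine forms it does: the
irreducible quadratic `x₀x₁ + 1` is no product of affine forms, but
`2 (x₀x₁ + 1) = (x₀ + 1)(x₁ + 1) + (x₀ - 1)(x₁ - 1)` is a sum over one Boolean variable of a
product of two of them.
-/

lemma polyBounded_const (k : ℕ) : PolyBounded fun _ => k :=
  ⟨k, fun n => (Nat.lt_two_pow_self).le.trans (Nat.pow_le_pow_left (by omega) k)⟩

lemma polyBounded_id : PolyBounded fun n => n :=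
  ⟨1, fun n => by simp only [pow_one]; omega⟩

lemma PolyBounded.comp {f g : ℕ → ℕ} (hf : PolyBounded f) (hg : PolyBounded g) :
    PolyBounded fun n => f (g n) := by
  obtain ⟨c, hc⟩ := hf
  obtain ⟨d, hd⟩ := hg
  refine ⟨(d + 2) * c, fun n => (hc (g n)).trans ?_⟩
  rw [pow_mul]
  refine Nat.pow_le_pow_left ?_ c
  have h1 : 1 ≤ (n + 2) ^ d := Nat.one_le_pow _ _ (by omega)
  have h4 : 2 ^ 2 ≤ (n + 2) ^ 2 := Nat.pow_le_pow_left (by omega) 2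
  calc g n + 2 ≤ (n + 2) ^ d * 2 ^ 2 := by nlinarith [hd n]
    _ ≤ (n + 2) ^ d * (n + 2) ^ 2 := Nat.mul_le_mul_left _ h4
    _ = (n + 2) ^ (d + 2) := (pow_add _ _ _).symm

lemma isPolyFamily_const {F : Type} [CommSemiring F] (p : MvPolynomial ℕ F) :
    IsPolyFamily fun _ => p :=
  ⟨fun _ => p.vars.sup id + 1, polyBounded_const _,
    fun _ _ hi => Nat.lt_succ_of_le (Finset.le_sup (f := id) hi)⟩

lemma Matrix.list_prod_ofFn_apply_zero_zero {R : Type*} [CommSemiring R] {s : ℕ}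
    (M : Fin s → Matrix (Fin 1) (Fin 1) R) : (List.ofFn M).prod 0 0 = ∏ i, M i 0 0 := by
  induction s with
  | zero => simp
  | succ s ih => simp [List.ofFn_succ, Fin.prod_univ_succ, Matrix.mul_apply, ih]

section WidthOne

variable {F : Type} [CommSemiring F]

lemma abpComputes_one_iff (form : MvPolynomial ℕ F → Prop) (s : ℕ) (f : MvPolynomial ℕ F) :
    ABPComputes form 1 s f ↔
      ∃ (c : F) (ℓ : Fin s → MvPolynomial ℕ F), (∀ i, form (ℓ i)) ∧ f = C c * ∏ i, ℓ i := by
  constructor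
  · rintro ⟨v, w, M, hM, rfl⟩
    refine ⟨v 0 * w 0, fun i => M i 0 0, fun i => hM i 0 0, ?_⟩
    simp [dotProduct, Matrix.mulVec, Matrix.list_prod_ofFn_apply_zero_zero]
    ring
  · rintro ⟨c, ℓ, hℓ, rfl⟩
    refine ⟨fun _ => c, fun _ => 1, fun i => Matrix.of fun _ _ => ℓ i, fun i _ _ => hℓ i, ?_⟩
    simp [dotProduct, Matrix.mulVec, Matrix.list_prod_ofFn_apply_zero_zero]

end WidthOne

section Closure

variable {F : Type} [CommSemiring F]

def hcSubst (p : ℕ) (b : Fin p → Bool) : ℕ → MvPolynomial ℕ F :=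
  fun i => if h : i < p then (if b ⟨i, h⟩ then 1 else 0) else X (i - p)

lemma hcSum_eq_sum_aeval (p : ℕ) (g : MvPolynomial ℕ F) :
    hcSum p g = ∑ b : Fin p → Bool, aeval (hcSubst p b) g := rfl

lemma hcSum_zero (g : MvPolynomial ℕ F) : hcSum 0 g = g := by
  rw [hcSum_eq_sum_aeval, Fintype.sum_unique]
  convert aeval_X_left_apply g
  funext i
  simp [hcSubst]

lemma VPkClass_subset_Nclosure (k : ℕ) (form : MvPolynomial ℕ F → Prop) :
    VPkClass F k form ⊆ Nclosure (VPkClass F k form) := fun f hf =>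
  ⟨hf.1, f, hf, fun _ => 0, fun n => n, polyBounded_const 0, polyBounded_id,
    fun n => (hcSum_zero (f n)).symm⟩

def ScalesUnderHcSubst (form : MvPolynomial ℕ F → Prop) : Prop :=
  ∀ (p : ℕ) (ℓ : MvPolynomial ℕ F), form ℓ →
    ∃ (γ : (Fin p → Bool) → F) (ℓ' : MvPolynomial ℕ F), form ℓ' ∧
      ∀ b, aeval (hcSubst p b) ℓ = C (γ b) * ℓ'

lemma ScalesUnderHcSubst.hcSum_C_mul_prod {form : MvPolynomial ℕ F → Prop}
    (hform : ScalesUnderHcSubst form) (p : ℕ) {s : ℕ} (c : F) (ℓ : Fin s → MvPolynomial ℕ F)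
    (hℓ : ∀ i, form (ℓ i)) :
    ∃ (d : F) (ℓ' : Fin s → MvPolynomial ℕ F), (∀ i, form (ℓ' i)) ∧
      hcSum p (C c * ∏ i, ℓ i) = C d * ∏ i, ℓ' i := by
  choose γ ℓ' hℓ' hγ using fun i => hform p (ℓ i) (hℓ i)
  refine ⟨c * ∑ b, ∏ i, γ i b, ℓ', hℓ', ?_⟩
  simp only [hcSum_eq_sum_aeval, map_mul, aeval_C, algebraMap_eq, map_prod, hγ,
    Finset.prod_mul_distrib, map_sum, ← Finset.sum_mul, ← Finset.mul_sum]
  ring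

lemma ScalesUnderHcSubst.Nclosure_subset {form : MvPolynomial ℕ F → Prop}
    (hform : ScalesUnderHcSubst form) :
    Nclosure (VPkClass F 1 form) ⊆ VPkClass F 1 form := by
  rintro f ⟨hfam, g, ⟨-, s, hs, hg⟩, p, q, -, hq, hfg⟩
  refine ⟨hfam, fun n => s (q n), hs.comp hq, fun n => ?_⟩
  obtain ⟨s', hs', hABP⟩ := hg (q n)
  obtain ⟨c, ℓ, hℓ, hgq⟩ := (abpComputes_one_iff form s' _).mp hABP
  obtain ⟨d, ℓ', hℓ', hsum⟩ := hform.hcSum_C_mul_prod (p n) c ℓ hℓ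
  exact ⟨s', hs', (abpComputes_one_iff form s' _).mpr ⟨d, ℓ', hℓ', by rw [hfg, hgq, hsum]⟩⟩

lemma scalesUnderHcSubst_isWeakestForm : ScalesUnderHcSubst (IsWeakestForm (F := F)) := by
  have hone : IsWeakestForm (1 : MvPolynomial ℕ F) := Or.inr ⟨1, C_1.symm⟩
  rintro p ℓ (⟨i, rfl⟩ | ⟨c, rfl⟩)
  · by_cases hi : i < p
    · refine ⟨fun b => if b ⟨i, hi⟩ then 1 else 0, 1, hone, fun b => ?_⟩
      simp only [aeval_X, hcSubst, dif_pos hi]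
      split <;> simp
    · exact ⟨fun _ => 1, X (i - p), Or.inl ⟨i - p, rfl⟩, fun b => by simp [hcSubst, hi]⟩
  · exact ⟨fun _ => c, 1, hone, fun b => by simp⟩

lemma scalesUnderHcSubst_isWeakForm : ScalesUnderHcSubst (IsWeakForm (F := F)) := by
  have hone : IsWeakForm (1 : MvPolynomial ℕ F) := ⟨0, 1, 0, by simp⟩
  rintro p ℓ ⟨α, β, i, rfl⟩
  by_cases hi : i < p
  · refine ⟨fun b => α * (if b ⟨i, hi⟩ then 1 else 0) + β, 1, hone, fun b => ?_⟩
    simp only [map_add, map_mul, aeval_C, aeval_X, algebraMap_eq, hcSubst, dif_pos hi]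
    split <;> simp
  · exact ⟨fun _ => 1, C α * X (i - p) + C β, ⟨α, β, i - p, rfl⟩,
      fun b => by simp [hcSubst, hi]⟩

end Closure

section Separation

lemma Irreducible.ne_C_mul_prod {σ ι F : Type*} [Field F] {p : MvPolynomial σ F}
    (hp : Irreducible p) (s : Finset ι) (ℓ : ι → MvPolynomial σ F)
    (hℓ : ∀ i ∈ s, (ℓ i).totalDegree < p.totalDegree) (c : F) :
    p ≠ C c * ∏ i ∈ s, ℓ i := by
  classical
  induction s using Finset.induction_on generalizing c with
  | empty =>
    rintro rfl
    rw [Finset.prod_empty, mul_one] at hp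
    by_cases hc : c = 0
    · exact hp.ne_zero (by rw [hc, C_0])
    · exact hp.not_isUnit ((IsUnit.mk0 c hc).map C)
  | insert a s ha ih =>
    intro h
    rw [Finset.prod_insert ha, mul_left_comm] at h
    rcases hp.isUnit_or_isUnit h with hu | hu
    · obtain ⟨r, -, hr⟩ := isUnit_iff_eq_C_of_isReduced.mp hu
      refine ih (fun i hi => hℓ i (Finset.mem_insert_of_mem hi)) (r * c) ?_
      rw [h, hr, C_mul, mul_assoc]
    · obtain ⟨r, -, hr⟩ := isUnit_iff_eq_C_of_isReduced.mp hu
      have hdeg : p.totalDegree ≤ (ℓ a).totalDegree := by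
        rw [h, hr]
        exact (totalDegree_mul _ _).trans (by rw [totalDegree_C, add_zero])
      exact (hℓ a (Finset.mem_insert_self a s)).not_ge hdeg

variable {F : Type} [Field F]

lemma irreducible_X_mul_X_add_one {i j : ℕ} (hij : i ≠ j) :
    Irreducible (X i * X j + 1 : MvPolynomial ℕ F) :=
  irreducible_mul_X_add (X i) 1 j (X_ne_zero i) (by simp [hij.symm]) (by simp)
    isRelPrime_one_right

lemma totalDegree_X_mul_X_add_one (i j : ℕ) :
    (X i * X j + 1 : MvPolynomial ℕ F).totalDegree = 2 := by
  have hXX : (X i * X j : MvPolynomial ℕ F).totalDegree = 2 := by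
    rw [totalDegree_mul_of_isDomain (X_ne_zero i) (X_ne_zero j), totalDegree_X, totalDegree_X]
  rw [totalDegree_add_eq_left_of_totalDegree_lt (by rw [hXX, totalDegree_one]; norm_num), hXX]

lemma X_mul_X_add_one_notMem_VPkClass :
    (fun _ => X 0 * X 1 + 1 : ℕ → MvPolynomial ℕ F) ∉ VPkClass F 1 IsGenForm := by
  rintro ⟨-, s, -, hs⟩
  obtain ⟨s', -, hABP⟩ := hs 0
  obtain ⟨c, ℓ, hℓ, h⟩ := (abpComputes_one_iff _ _ _).mp hABP
  refine (irreducible_X_mul_X_add_one zero_ne_one).ne_C_mul_prod Finset.univ ℓ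
    (fun i _ => ?_) c h
  rw [totalDegree_X_mul_X_add_one]
  exact (hℓ i).trans_lt one_lt_two

lemma isGenForm_C_mul_X_add_X_add_one (a : F) (i j : ℕ) :
    IsGenForm (C a * X i + X j + 1 : MvPolynomial ℕ F) := by
  refine (totalDegree_add _ _).trans (max_le ((totalDegree_add _ _).trans (max_le ?_ ?_)) ?_)
  · exact (totalDegree_mul _ _).trans (by simp)
  · simp
  · simp

/-- Summing out `x₀` shifts the other variables down by one; at `x₀ = 0, 1` this polynomial
becomes `(x₀ + 1)(x₁ + 1) / 2` and `(x₀ - 1)(x₁ - 1) / 2`. -/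
def witnessXMulXAddOne (F : Type) [Field F] : MvPolynomial ℕ F :=
  C (2⁻¹ : F) * ∏ i : Fin 2, (C (-2 : F) * X 0 + X ((i : ℕ) + 1) + 1)

lemma hcSum_one_witnessXMulXAddOne (h2 : (2 : F) ≠ 0) :
    hcSum 1 (witnessXMulXAddOne F) = X 0 * X 1 + 1 := by
  have hinv : (C (2⁻¹ : F) : MvPolynomial ℕ F) * 2 = 1 := by
    rw [← map_ofNat C 2, ← C_mul, inv_mul_cancel₀ h2, C_1]
  rw [hcSum_eq_sum_aeval, ← (Equiv.funUnique (Fin 1) Bool).symm.sum_comp, Fintype.sum_bool]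
  simp [witnessXMulXAddOne, hcSubst, Fin.prod_univ_two]
  rw [map_ofNat C 2]
  linear_combination (X 0 * X 1 + 1) * hinv

lemma witnessXMulXAddOne_mem_VPkClass :
    (fun _ => witnessXMulXAddOne F) ∈ VPkClass F 1 IsGenForm :=
  ⟨isPolyFamily_const _, fun _ => 2, polyBounded_const 2, fun _ => ⟨2, le_rfl,
    (abpComputes_one_iff _ _ _).mpr ⟨_, _, fun _ => isGenForm_C_mul_X_add_X_add_one _ 0 _, rfl⟩⟩⟩

lemma X_mul_X_add_one_mem_Nclosure (h2 : (2 : F) ≠ 0) :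
    (fun _ => X 0 * X 1 + 1 : ℕ → MvPolynomial ℕ F) ∈ Nclosure (VPkClass F 1 IsGenForm) :=
  ⟨isPolyFamily_const _, _, witnessXMulXAddOne_mem_VPkClass, fun _ => 1, fun n => n,
    polyBounded_const 1, polyBounded_id, fun _ => (hcSum_one_witnessXMulXAddOne h2).symm⟩

end Separation

/-- `VP_1^weakest = VNP_1^weakest` and `VP_1^weak = VNP_1^weak` over any
field; if moreover `char F ≠ 2`, then `VP_1^gen ⊊ VNP_1^gen`. -/
theorem statement18 (F : Type) [Field F] :
    (VPkClass F 1 IsWeakestForm = Nclosure (VPkClass F 1 IsWeakestForm) ∧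
     VPkClass F 1 IsWeakForm = Nclosure (VPkClass F 1 IsWeakForm)) ∧
    (ringChar F ≠ 2 → VPkClass F 1 IsGenForm ⊂ Nclosure (VPkClass F 1 IsGenForm)) := by
  refine ⟨⟨(VPkClass_subset_Nclosure 1 _).antisymm
      scalesUnderHcSubst_isWeakestForm.Nclosure_subset,
    (VPkClass_subset_Nclosure 1 _).antisymm scalesUnderHcSubst_isWeakForm.Nclosure_subset⟩,
    fun hchar => ⟨VPkClass_subset_Nclosure 1 _, fun hsub => ?_⟩⟩
  have h2 : (2 : F) ≠ 0 := Ring.two_ne_zero hchar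
  exact X_mul_X_add_one_notMem_VPkClass (hsub (X_mul_X_add_one_mem_Nclosure h2))

end
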